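/- For d = 3 and h ≤ ⌈n/3⌉, one has C_{n,h}^{(3)} = ((h+1)(h+2) + (6·δ(3∣n) − 2)·δ(3∣h)) / 6, where δ(3∣m) is 1 if 3 divides m and 0 otherwise. -/

import Mathlib

/-- `X_3 = {(1,-2,0), (-2,1,0), (-1,-1,1), (0,0,-1)}`. -/
def X3 : Set (Fin 3 → ℤ) := {![1, -2, 0], ![-2, 1, 0], ![-1, -1, 1], ![0, 0, -1]}

def nonneg3 (v : Fin 3 → ℤ) : Prop := ∀ i, 0 ≤ v i

/-- Covering relation `v ⋖ w` on `Λ_3 = ℤ_{≥0}^3`. -/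
def cov3 (v w : Fin 3 → ℤ) : Prop := nonneg3 v ∧ nonneg3 w ∧ ∃ x ∈ X3, v = w + x

/-- The order `≺` on `Λ_3`. -/
def prec3 : (Fin 3 → ℤ) → (Fin 3 → ℤ) → Prop := Relation.TransGen cov3

/-- The principal ideal `I(v) = {v} ∪ {w : w ≺ v}`. -/
def ideal3 (v : Fin 3 → ℤ) : Set (Fin 3 → ℤ) := {v} ∪ { w | prec3 w v }

/-- `C_n^{(3)} = |I(n·e(1))|`. -/
noncomputable def C3 (n : ℕ) : ℕ := (ideal3 ![(n : ℤ), 0, 0]).ncard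

/-- `C_{n,h}^{(3)}`: the number of elements of height `h` in `I(n·e(1))`. -/
noncomputable def C3h (n h : ℕ) : ℕ :=
  ({ w ∈ ideal3 ![(n : ℤ), 0, 0] | w 0 + w 1 + w 2 = (h : ℤ) }).ncard


open Finset Relation

/-!
The weight `a + 2b + 3c` of `(a, b, c)` drops by `0` or `3` along every covering step, so the ideal
of `n·e(1)` consists of nonnegative vectors of weight `≤ n` and `≡ n (mod 3)`. Conversely such a
vector climbs to `(n, 0, 0)` through the moves `(a, b, c) ↦ (a + 1, b + 1, c - 1)`,
`(a, b, 0) ↦ (a + 2, b - 1, 0)` and `(m, 0, 0) ↦ (m, 0, 1) ↦ (m + 1, 1, 0) ↦ (m + 3, 0, 0)`.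
At height `h` with `3h ≤ n + 2` the weight bound is automatic, so `C_{n,h}` counts the triples
`(m - j, j, h - m)` with `j ≤ m ≤ h` and `m + j ≡ n (mod 3)`: summing the residue counts over the
diagonals `m ≤ h` gives the formula by induction on `h`.
-/

def weight3 (v : Fin 3 → ℤ) : ℤ := v 0 + 2 * v 1 + 3 * v 2

lemma nonneg3_vec {a b c : ℤ} : nonneg3 ![a, b, c] ↔ 0 ≤ a ∧ 0 ≤ b ∧ 0 ≤ c := by
  simp [nonneg3, Fin.forall_fin_succ]

lemma weight3_add (v w : Fin 3 → ℤ) : weight3 (v + w) = weight3 v + weight3 w := by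
  simp only [weight3, Pi.add_apply]; ring

lemma weight3_of_mem_X3 {x : Fin 3 → ℤ} (hx : x ∈ X3) : weight3 x = 0 ∨ weight3 x = -3 := by
  rcases hx with rfl | rfl | rfl | rfl <;> simp [weight3]

lemma cov3.weight3_le_and_modEq {v w : Fin 3 → ℤ} (h : cov3 v w) :
    weight3 v ≤ weight3 w ∧ weight3 v ≡ weight3 w [ZMOD 3] := by
  obtain ⟨-, -, x, hx, rfl⟩ := h
  rw [weight3_add, Int.ModEq]
  rcases weight3_of_mem_X3 hx with h | h <;> omega

lemma prec3.nonneg_and_weight3 {w v : Fin 3 → ℤ} (h : prec3 w v) :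
    nonneg3 w ∧ weight3 w ≤ weight3 v ∧ weight3 w ≡ weight3 v [ZMOD 3] := by
  induction h with
  | single h => exact ⟨h.1, h.weight3_le_and_modEq⟩
  | tail _ h ih =>
    obtain ⟨hle, hmod⟩ := h.weight3_le_and_modEq
    exact ⟨ih.1, ih.2.1.trans hle, ih.2.2.trans hmod⟩

lemma reflTransGen_cov3_sub_smul {x v : Fin 3 → ℤ} (hx : x ∈ X3) {k : ℤ} (hk : 0 ≤ k)
    (hv : nonneg3 v) (hvk : nonneg3 (v - k • x)) : ReflTransGen cov3 v (v - k • x) := by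
  induction k, hk using Int.leInduction with
  | base => simpa using .refl
  | succ k hk ih =>
    -- each coordinate of `v - k • x` is affine in `k`, so nonnegative between the two ends
    have hu : nonneg3 (v - k • x) := fun i => by
      have h0 := hv i
      have h1 := hvk i
      simp only [Pi.sub_apply, Pi.smul_apply, smul_eq_mul] at h1 ⊢
      rcases le_total 0 (x i) with h | h <;> nlinarith
    exact (ih hu).tail ⟨hu, hvk, x, hx, by rw [add_smul, one_smul]; abel⟩

lemma reflTransGen_cov3_of_eq_sub_smul {x v w : Fin 3 → ℤ} (hx : x ∈ X3) {k : ℤ} (hk : 0 ≤ k)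
    (hv : nonneg3 v) (hw : nonneg3 w) (h : v - k • x = w) : ReflTransGen cov3 v w :=
  h ▸ reflTransGen_cov3_sub_smul hx hk hv (h ▸ hw)

lemma reflTransGen_cov3_vec {a b c k : ℤ} (ha : 0 ≤ a) (hb : 0 ≤ b) (hc : 0 ≤ c) (hk : 0 ≤ k) :
    ReflTransGen cov3 ![a, b, c] ![a + 2 * b + 3 * c + 3 * k, 0, 0] := by
  have hx₁ : ![-1, -1, 1] ∈ X3 := by simp [X3]
  have hx₂ : ![-2, 1, 0] ∈ X3 := by simp [X3]
  have hx₃ : ![0, 0, -1] ∈ X3 := by simp [X3]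
  calc ReflTransGen cov3 ![a, b, c] ![a + c, b + c, 0] :=
        reflTransGen_cov3_of_eq_sub_smul hx₁ hc (nonneg3_vec.2 (by omega))
          (nonneg3_vec.2 (by omega)) (by ext i; fin_cases i <;> simp)
    ReflTransGen cov3 _ ![a + 2 * b + 3 * c, 0, 0] :=
        reflTransGen_cov3_of_eq_sub_smul hx₂ (k := b + c) (by omega) (nonneg3_vec.2 (by omega))
          (nonneg3_vec.2 (by omega)) (by ext i; fin_cases i <;> simp; ring)
    ReflTransGen cov3 _ ![a + 2 * b + 3 * c, 0, k] :=
        reflTransGen_cov3_of_eq_sub_smul hx₃ hk (nonneg3_vec.2 (by omega))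
          (nonneg3_vec.2 (by omega)) (by ext i; fin_cases i <;> simp)
    ReflTransGen cov3 _ ![a + 2 * b + 3 * c + k, k, 0] :=
        reflTransGen_cov3_of_eq_sub_smul hx₁ hk (nonneg3_vec.2 (by omega))
          (nonneg3_vec.2 (by omega)) (by ext i; fin_cases i <;> simp)
    ReflTransGen cov3 _ ![a + 2 * b + 3 * c + 3 * k, 0, 0] :=
        reflTransGen_cov3_of_eq_sub_smul hx₂ hk (nonneg3_vec.2 (by omega))
          (nonneg3_vec.2 (by omega)) (by ext i; fin_cases i <;> simp; ring)

theorem mem_ideal3_iff {m : ℤ} (hm : 0 ≤ m) {w : Fin 3 → ℤ} :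
    w ∈ ideal3 ![m, 0, 0] ↔ nonneg3 w ∧ weight3 w ≤ m ∧ weight3 w ≡ m [ZMOD 3] := by
  have hwt : weight3 ![m, 0, 0] = m := by simp [weight3]
  constructor
  · rintro (rfl | hw)
    · exact ⟨nonneg3_vec.2 ⟨hm, le_rfl, le_rfl⟩, hwt.le, by rw [hwt]⟩
    · simpa only [hwt] using hw.nonneg_and_weight3
  · rintro ⟨hw, hle, hmod⟩
    obtain ⟨k, hk⟩ := hmod.dvd
    have hreach := reflTransGen_cov3_vec (hw 0) (hw 1) (hw 2) (k := k) (by omega)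
    have hw3 : ![w 0, w 1, w 2] = w := by ext i; fin_cases i <;> rfl
    rw [hw3, show w 0 + 2 * w 1 + 3 * w 2 + 3 * k = m by simp only [weight3] at hk; omega]
      at hreach
    exact (reflTransGen_iff_eq_or_transGen.1 hreach).imp Eq.symm id

def level3 (n h : ℕ) : Set (Fin 3 → ℤ) :=
  {w | nonneg3 w ∧ w 0 + w 1 + w 2 = h ∧ weight3 w ≡ n [ZMOD 3]}

lemma slice_ideal3_eq_level3 {n h : ℕ} (hh : 3 * h ≤ n + 2) :
    {w ∈ ideal3 ![(n : ℤ), 0, 0] | w 0 + w 1 + w 2 = h} = level3 n h := by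
  ext w
  simp only [Set.mem_ofPred_eq, level3, mem_ideal3_iff (Nat.cast_nonneg n)]
  refine ⟨fun ⟨⟨hw, _, hmod⟩, hsum⟩ => ⟨hw, hsum, hmod⟩, ?_⟩
  rintro ⟨hw, hsum, hmod⟩
  refine ⟨⟨hw, ?_, hmod⟩, hsum⟩
  have := hw 0; have := hw 1; have := hw 2
  simp only [Int.ModEq, weight3] at hmod ⊢
  omega

lemma level3_eq_image (n h : ℕ) :
    level3 n h = ↑(((range (h + 1)).sigma fun m => {j ∈ range (m + 1) | m + j ≡ n [MOD 3]}).image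
      fun p => ![(p.1 : ℤ) - p.2, p.2, h - p.1]) := by
  ext w
  simp only [level3, Set.mem_ofPred_eq, coe_image, Set.mem_image, mem_coe, mem_sigma, mem_range,
    mem_filter, Int.ModEq, weight3]
  unfold Nat.ModEq
  constructor
  · rintro ⟨hw, hsum, hmod⟩
    have := hw 0; have := hw 1; have := hw 2
    refine ⟨⟨(w 0 + w 1).toNat, (w 1).toNat⟩, ?_, ?_⟩
    · dsimp only
      omega
    · ext i; fin_cases i <;> simp <;> omega
  · rintro ⟨⟨m, j⟩, ⟨hm, hj, hmod⟩, rfl⟩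
    refine ⟨nonneg3_vec.2 ⟨by omega, by omega, by omega⟩, by simp, ?_⟩
    dsimp only at hm hj hmod
    simp only [Matrix.cons_val]
    omega

lemma ncard_level3 (n h : ℕ) :
    (level3 n h).ncard = ∑ m ∈ range (h + 1), #{j ∈ range (m + 1) | m + j ≡ n [MOD 3]} := by
  rw [level3_eq_image, Set.ncard_coe_finset, card_image_of_injective, card_sigma]
  rintro ⟨m, j⟩ ⟨m', j'⟩ h
  have h1 := congrFun h 1
  have h2 := congrFun h 2
  simp only [Matrix.cons_val, Nat.cast_inj, sub_right_inj] at h1 h2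
  subst h1; subst h2; rfl

lemma card_filter_add_modEq (m n : ℕ) :
    #{j ∈ range (m + 1) | m + j ≡ n [MOD 3]} =
      (m + 1) / 3 + if (n + 2 * m) % 3 < (m + 1) % 3 then 1 else 0 := by
  rw [← Nat.count_modEq_card _ (by norm_num), Nat.count_eq_card_filter_range]
  exact congrArg card (filter_congr fun j _ => by simp only [Nat.ModEq]; omega)

lemma six_mul_sum_card_filter_add_modEq (n h : ℕ) :
    6 * ((∑ m ∈ range (h + 1), #{j ∈ range (m + 1) | m + j ≡ n [MOD 3]} : ℕ) : ℤ) =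
      ((h : ℤ) + 1) * ((h : ℤ) + 2) +
        (6 * (if 3 ∣ n then (1 : ℤ) else 0) - 2) * (if 3 ∣ h then (1 : ℤ) else 0) := by
  induction h with
  | zero =>
    rw [sum_range_one, card_filter_add_modEq]
    split_ifs <;> omega
  | succ h ih =>
    rw [sum_range_succ, Nat.cast_add, mul_add, ih, card_filter_add_modEq]
    have hsq : (((h + 1 : ℕ) : ℤ) + 1) * ((h + 1 : ℕ) + 2) = (h + 1) * (h + 2) + 2 * h + 4 := by
      push_cast; ring
    rw [hsq]
    obtain ⟨q, rfl | rfl | rfl⟩ : ∃ q, h = 3 * q ∨ h = 3 * q + 1 ∨ h = 3 * q + 2 :=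
      ⟨h / 3, by omega⟩
    all_goals split_ifs <;> omega

theorem stmt10 (n h : ℕ) (hh : h ≤ (n + 2) / 3) :
    6 * (C3h n h : ℤ) =
      ((h : ℤ) + 1) * ((h : ℤ) + 2) +
        (6 * (if 3 ∣ n then (1 : ℤ) else 0) - 2) * (if 3 ∣ h then (1 : ℤ) else 0) := by
  rw [C3h, slice_ideal3_eq_level3 (by omega), ncard_level3]
  exact six_mul_sum_card_filter_add_modEq n h
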